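/- Let A = C^∞(ℝ⁴, ℂ) with global coordinates (t, x¹, x², x³), let X_1 = ∂_t and X_2 = Σ_{j=1}^{3} x^j ∂_j, and let Θ = [[0,1],[−1,0]]. With the associated twist star product ⋆ on A[[λ]], the coordinate functions satisfy the κ-Minkowski relations: t ⋆ x^j − x^j ⋆ t = iλ · x^j for j = 1, 2, 3, and x^i ⋆ x^j − x^j ⋆ x^i = 0 for all i, j (indeed x^i ⋆ x^j = x^i x^j exactly, with no higher-order corrections). -/

import Mathlib

open scoped BigOperators

noncomputable section

/-- Iterated application of the vector fields `X` along the multi-index `α`. -/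
def derivSeq {A : Type*} {m : ℕ} (X : Fin m → A → A) :
    (n : ℕ) → (Fin n → Fin m) → A → A
  | 0, _, f => f
  | n + 1, α, f => X (α 0) (derivSeq X n (fun i => α i.succ) f)

/-- The `λⁿ`-coefficient bidifferential operator of the twist star product. -/
def twistCoeff {A : Type*} [CommRing A] [Algebra ℂ A] {m : ℕ}
    (X : Fin m → A → A) (Θ : Fin m → Fin m → ℝ) (n : ℕ) (f g : A) : A :=
  (((n.factorial : ℂ))⁻¹ * (Complex.I / 2) ^ n) •
    ∑ α : Fin n → Fin m, ∑ β : Fin n → Fin m,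
      (((∏ t, Θ (α t) (β t) : ℝ) : ℂ)) • (derivSeq X n α f * derivSeq X n β g)

/-- The twist star product on the module `A[[λ]]` of formal power series over `A`. -/
def twistStar {A : Type*} [CommRing A] [Algebra ℂ A] {m : ℕ}
    (X : Fin m → A → A) (Θ : Fin m → Fin m → ℝ) (f g : PowerSeries A) : PowerSeries A :=
  PowerSeries.mk fun n =>
    ∑ p ∈ Finset.HasAntidiagonal.antidiagonal n, ∑ q ∈ Finset.HasAntidiagonal.antidiagonal p.2,
      twistCoeff X Θ p.1 (PowerSeries.coeff q.1 f) (PowerSeries.coeff q.2 g)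

/-- Functions on `ℝ⁴` with coordinates `x⁰ = t, x¹, x², x³`. -/
abbrev MinkFun : Type := (Fin 4 → ℝ) → ℂ

/-- The partial derivative `∂_μ` on functions on `ℝ⁴`. -/
def pderiv4 (μ : Fin 4) (f : MinkFun) : MinkFun :=
  fun p => deriv (fun s => f (Function.update p μ s)) (p μ)

/-- The coordinate function `x^μ`. -/
def coord4 (μ : Fin 4) : MinkFun := fun p => (p μ : ℂ)

/-- The vector fields `X₁ = ∂_t` and `X₂ = Σ_{j=1}^{3} x^j ∂_j` on `ℝ⁴`. -/
def kappaX : Fin 2 → MinkFun → MinkFun :=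
  ![fun f => pderiv4 0 f,
    fun f p => ∑ j : Fin 3, (p j.succ : ℂ) * pderiv4 j.succ f p]

/-- The antisymmetric matrix `Θ = [[0,1],[−1,0]]`. -/
def theta2 : Fin 2 → Fin 2 → ℝ := ![![0, 1], ![-1, 0]]

/-!
The spatial coordinates `x^j` are joint eigenfunctions of `X₁ = ∂_t` and `X₂ = x^k ∂_k`, with
weights `a = (0, 1)`. For joint eigenfunctions with weights `a`, `b` the `λⁿ`-coefficient of the
twist product is `(n!)⁻¹ (i aᵀΘb / 2)ⁿ f g`, so `f ⋆ g = exp (iλ aᵀΘb / 2) f g`; here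
`aᵀΘb = Θ²² = 0`. The time coordinate has constant first derivatives, so in `t ⋆ x^j` and
`x^j ⋆ t` only the first-order term survives, and it is `± (i/2) Θ¹² x^j`.
-/

section DerivSeq

variable {A : Type*} {m : ℕ} {X : Fin m → A → A}

theorem derivSeq_zero_right [Zero A] (hX : ∀ k, X k 0 = 0) :
    ∀ (n : ℕ) (α : Fin n → Fin m), derivSeq X n α 0 = 0
  | 0, _ => rfl
  | n + 1, α => by rw [derivSeq, derivSeq_zero_right hX n, hX]

theorem derivSeq_add_two_eq_zero [Zero A] (hX : ∀ k, X k 0 = 0) {f : A}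
    (hf : ∀ k l, X l (X k f) = 0) : ∀ (n : ℕ) (α : Fin (n + 2) → Fin m), derivSeq X (n + 2) α f = 0
  | 0, α => hf _ _
  | n + 1, α => by rw [derivSeq, derivSeq_add_two_eq_zero hX hf n, hX]

theorem derivSeq_of_eigen {R : Type*} [CommMonoid R] [MulAction R A]
    (hX : ∀ k (c : R) u, X k (c • u) = c • X k u) {f : A} {a : Fin m → R}
    (hf : ∀ k, X k f = a k • f) :
    ∀ (n : ℕ) (α : Fin n → Fin m), derivSeq X n α f = (∏ t, a (α t)) • f
  | 0, _ => by simp [derivSeq]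
  | n + 1, α => by
    rw [derivSeq, derivSeq_of_eigen hX hf n, hX, hf, smul_smul, Fin.prod_univ_succ, mul_comm]

end DerivSeq

section Twist

variable {A : Type*} [CommRing A] [Algebra ℂ A] {m : ℕ} (X : Fin m → A → A)
  (Θ : Fin m → Fin m → ℝ)

theorem twistCoeff_zero (f g : A) : twistCoeff X Θ 0 f g = f * g := by
  simp [twistCoeff, derivSeq]

theorem twistCoeff_one (f g : A) :
    twistCoeff X Θ 1 f g = (Complex.I / 2) • ∑ k, ∑ l, (Θ k l : ℂ) • (X k f * X l g) := by
  simp only [twistCoeff, Nat.factorial_one, Nat.cast_one, inv_one, one_mul, pow_one]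
  rw [← (Equiv.funUnique (Fin 1) (Fin m)).symm.sum_comp]
  simp_rw [← (Equiv.funUnique (Fin 1) (Fin m)).symm.sum_comp]
  simp [derivSeq]

variable {X Θ}

theorem twistCoeff_eq_zero {n : ℕ} {f g : A}
    (h : ∀ α β : Fin n → Fin m, derivSeq X n α f * derivSeq X n β g = 0) :
    twistCoeff X Θ n f g = 0 := by
  simp [twistCoeff, h]

theorem twistCoeff_zero_left (hX : ∀ k, X k 0 = 0) (n : ℕ) (g : A) : twistCoeff X Θ n 0 g = 0 :=
  twistCoeff_eq_zero fun α _ => by rw [derivSeq_zero_right hX, zero_mul]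

theorem twistCoeff_zero_right (hX : ∀ k, X k 0 = 0) (n : ℕ) (f : A) : twistCoeff X Θ n f 0 = 0 :=
  twistCoeff_eq_zero fun _ β => by rw [derivSeq_zero_right hX, mul_zero]

theorem twistCoeff_add_two_eq_zero_of_left (hX : ∀ k, X k 0 = 0) {f : A}
    (hf : ∀ k l, X l (X k f) = 0) (n : ℕ) (g : A) : twistCoeff X Θ (n + 2) f g = 0 :=
  twistCoeff_eq_zero fun α _ => by rw [derivSeq_add_two_eq_zero hX hf, zero_mul]

theorem twistCoeff_add_two_eq_zero_of_right (hX : ∀ k, X k 0 = 0) {g : A}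
    (hg : ∀ k l, X l (X k g) = 0) (n : ℕ) (f : A) : twistCoeff X Θ (n + 2) f g = 0 :=
  twistCoeff_eq_zero fun _ β => by rw [derivSeq_add_two_eq_zero hX hg, mul_zero]

theorem sum_pi_sum_pi_prod {R : Type*} [CommSemiring R] (F : Fin m → Fin m → R) (n : ℕ) :
    ∑ α : Fin n → Fin m, ∑ β : Fin n → Fin m, ∏ t, F (α t) (β t) = (∑ k, ∑ l, F k l) ^ n := by
  simp_rw [Fintype.sum_pow, Fintype.prod_sum]

theorem twistCoeff_of_eigen (hX : ∀ k (c : ℂ) u, X k (c • u) = c • X k u) {f g : A}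
    {a b : Fin m → ℂ} (hf : ∀ k, X k f = a k • f) (hg : ∀ k, X k g = b k • g) (n : ℕ) :
    twistCoeff X Θ n f g =
      ((n.factorial : ℂ)⁻¹ * (Complex.I / 2 * ∑ k, ∑ l, (Θ k l : ℂ) * a k * b l) ^ n) •
        (f * g) := by
  simp only [twistCoeff, derivSeq_of_eigen hX hf, derivSeq_of_eigen hX hg, smul_mul_smul,
    smul_smul, ← Finset.sum_smul]
  rw [mul_pow, mul_assoc, ← sum_pi_sum_pi_prod]
  simp [Finset.prod_mul_distrib, mul_assoc]

theorem coeff_twistStar_C_C (hX : ∀ k, X k 0 = 0) (f g : A) (n : ℕ) :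
    PowerSeries.coeff n (twistStar X Θ (PowerSeries.C f) (PowerSeries.C g)) =
      twistCoeff X Θ n f g := by
  rw [twistStar, PowerSeries.coeff_mk, Finset.sum_eq_single (n, 0)]
  · simp
  · rintro ⟨p, q⟩ hpq hne
    have hq : q ≠ 0 := by
      rintro rfl
      exact hne (by simpa using hpq)
    refine Finset.sum_eq_zero fun r hr => ?_
    rw [Finset.HasAntidiagonal.mem_antidiagonal] at hr
    obtain hr₁ | hr₁ := eq_or_ne r.1 0
    · rw [PowerSeries.coeff_C_of_ne_zero (n := r.2) (by dsimp at hr; omega),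
        twistCoeff_zero_right hX]
    · rw [PowerSeries.coeff_C_of_ne_zero hr₁, twistCoeff_zero_left hX]
  · simp

theorem twistStar_C_C_eq_C_mul (hX : ∀ k, X k 0 = 0) {f g : A}
    (h : ∀ n, twistCoeff X Θ (n + 1) f g = 0) :
    twistStar X Θ (PowerSeries.C f) (PowerSeries.C g) = PowerSeries.C (f * g) := by
  ext (_ | n)
  · rw [coeff_twistStar_C_C hX, twistCoeff_zero, PowerSeries.coeff_zero_C]
  · rw [coeff_twistStar_C_C hX, h, PowerSeries.coeff_C, if_neg n.succ_ne_zero]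

theorem twistStar_C_C_eq_add_X_mul (hX : ∀ k, X k 0 = 0) {f g : A}
    (h : ∀ n, twistCoeff X Θ (n + 2) f g = 0) :
    twistStar X Θ (PowerSeries.C f) (PowerSeries.C g) =
      PowerSeries.C (f * g) + PowerSeries.X * PowerSeries.C (twistCoeff X Θ 1 f g) := by
  ext (_ | _ | n) <;> simp [coeff_twistStar_C_C hX, twistCoeff_zero, h, PowerSeries.coeff_X]

theorem twistStar_C_C_of_eigen (hX : ∀ k (c : ℂ) u, X k (c • u) = c • X k u) {f g : A}
    {a b : Fin m → ℂ} (hf : ∀ k, X k f = a k • f) (hg : ∀ k, X k g = b k • g)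
    (hab : ∑ k, ∑ l, (Θ k l : ℂ) * a k * b l = 0) :
    twistStar X Θ (PowerSeries.C f) (PowerSeries.C g) = PowerSeries.C (f * g) :=
  twistStar_C_C_eq_C_mul (fun k => by simpa using hX k 0 0) fun n => by
    simp [twistCoeff_of_eigen hX hf hg, hab]

end Twist

theorem pderiv4_smul (μ : Fin 4) (c : ℂ) (f : MinkFun) : pderiv4 μ (c • f) = c • pderiv4 μ f := by
  funext p
  simp only [pderiv4, Pi.smul_apply, smul_eq_mul, deriv_const_mul_field]

theorem pderiv4_one (μ : Fin 4) : pderiv4 μ 1 = 0 := by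
  funext p
  simp [pderiv4]

theorem pderiv4_coord4 (ν μ : Fin 4) : pderiv4 ν (coord4 μ) = if ν = μ then 1 else 0 := by
  funext p
  split_ifs with h
  · subst h
    simp only [pderiv4, coord4, Function.update_self]
    exact Complex.ofRealCLM.hasDerivAt.deriv
  · simp [pderiv4, coord4, Function.update_of_ne (Ne.symm h)]

theorem kappaX_smul (k : Fin 2) (c : ℂ) (f : MinkFun) : kappaX k (c • f) = c • kappaX k f := by
  fin_cases k
  · exact pderiv4_smul 0 c f
  · funext p
    simp [kappaX, pderiv4_smul, Finset.mul_sum, mul_left_comm]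

theorem kappaX_apply_one (k : Fin 2) : kappaX k 1 = 0 := by
  fin_cases k
  · exact pderiv4_one 0
  · funext p
    simp [kappaX, pderiv4_one]

theorem kappaX_coord4_zero (k : Fin 2) : kappaX k (coord4 0) = if k = 0 then 1 else 0 := by
  fin_cases k
  · simp [kappaX, pderiv4_coord4]
  · funext p
    simp [kappaX, pderiv4_coord4, Fin.succ_ne_zero]

theorem kappaX_coord4_of_ne_zero {j : Fin 4} (hj : j ≠ 0) (k : Fin 2) :
    kappaX k (coord4 j) = (if k = 1 then 1 else 0 : ℂ) • coord4 j := by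
  obtain ⟨i, rfl⟩ := Fin.exists_succ_eq.mpr hj
  fin_cases k
  · simp [kappaX, pderiv4_coord4, hj.symm]
  · funext p
    simp [kappaX, pderiv4_coord4, coord4, ite_apply]

theorem kappaX_apply_zero (k : Fin 2) : kappaX k 0 = 0 := by
  simpa using kappaX_smul k 0 0

theorem kappaX_kappaX_coord4_zero (k l : Fin 2) : kappaX l (kappaX k (coord4 0)) = 0 := by
  rw [kappaX_coord4_zero]
  split_ifs
  exacts [kappaX_apply_one l, kappaX_apply_zero l]

theorem twistStar_C_coord4_of_ne_zero {i j : Fin 4} (hi : i ≠ 0) (hj : j ≠ 0) :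
    twistStar kappaX theta2 (PowerSeries.C (coord4 i)) (PowerSeries.C (coord4 j)) =
      PowerSeries.C (coord4 i * coord4 j) :=
  twistStar_C_C_of_eigen kappaX_smul (kappaX_coord4_of_ne_zero hi) (kappaX_coord4_of_ne_zero hj)
    (by simp [theta2])

theorem twistStar_C_coord4_zero_left {j : Fin 4} (hj : j ≠ 0) :
    twistStar kappaX theta2 (PowerSeries.C (coord4 0)) (PowerSeries.C (coord4 j)) =
      PowerSeries.C (coord4 0 * coord4 j) +
        PowerSeries.X * PowerSeries.C ((Complex.I / 2) • coord4 j) := by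
  rw [twistStar_C_C_eq_add_X_mul kappaX_apply_zero
    (twistCoeff_add_two_eq_zero_of_left kappaX_apply_zero kappaX_kappaX_coord4_zero · _)]
  simp [twistCoeff_one, theta2, kappaX_coord4_zero, kappaX_coord4_of_ne_zero hj]

theorem twistStar_C_coord4_zero_right {j : Fin 4} (hj : j ≠ 0) :
    twistStar kappaX theta2 (PowerSeries.C (coord4 j)) (PowerSeries.C (coord4 0)) =
      PowerSeries.C (coord4 0 * coord4 j) -
        PowerSeries.X * PowerSeries.C ((Complex.I / 2) • coord4 j) := by
  rw [twistStar_C_C_eq_add_X_mul kappaX_apply_zero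
    (twistCoeff_add_two_eq_zero_of_right kappaX_apply_zero kappaX_kappaX_coord4_zero · _)]
  simp [twistCoeff_one, theta2, kappaX_coord4_zero, kappaX_coord4_of_ne_zero hj, mul_comm,
    sub_eq_add_neg]

/-- With the twist built from `X₁ = ∂_t` and `X₂ = x^j ∂_j` on Minkowski
space `ℝ⁴`, the coordinate functions satisfy the κ-Minkowski relations
`t ⋆ x^j − x^j ⋆ t = iλ x^j` and `x^i ⋆ x^j = x^i x^j` exactly (in particular the spatial
coordinates ⋆-commute). -/
theorem kappa_minkowski_relations :
    (∀ j : Fin 4, j ≠ 0 →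
      twistStar kappaX theta2 (PowerSeries.C (coord4 0))
          (PowerSeries.C (coord4 j)) -
        twistStar kappaX theta2 (PowerSeries.C (coord4 j))
          (PowerSeries.C (coord4 0)) =
        PowerSeries.X * PowerSeries.C (Complex.I • coord4 j)) ∧
    (∀ i j : Fin 4, i ≠ 0 → j ≠ 0 →
      twistStar kappaX theta2 (PowerSeries.C (coord4 i))
          (PowerSeries.C (coord4 j)) =
        PowerSeries.C (coord4 i * coord4 j)) ∧
    (∀ i j : Fin 4, i ≠ 0 → j ≠ 0 →
      twistStar kappaX theta2 (PowerSeries.C (coord4 i))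
          (PowerSeries.C (coord4 j)) -
        twistStar kappaX theta2 (PowerSeries.C (coord4 j))
          (PowerSeries.C (coord4 i)) = 0) := by
  refine ⟨fun j hj => ?_, fun i j hi hj => twistStar_C_coord4_of_ne_zero hi hj,
    fun i j hi hj => ?_⟩
  · have hI : Complex.I • coord4 j = (Complex.I / 2) • coord4 j + (Complex.I / 2) • coord4 j := by
      rw [← add_smul, add_halves]
    rw [twistStar_C_coord4_zero_left hj, twistStar_C_coord4_zero_right hj, hI, map_add]
    ring
  · rw [twistStar_C_coord4_of_ne_zero hi hj, twistStar_C_coord4_of_ne_zero hj hi, mul_comm,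
      sub_self]
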